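/- arXiv:1811.03015 — 11 statements merged into one kernel-verified Lean document; each statement's English description precedes it below -/
import Mathlib

section
/- For every nonnegative integer n, the identity B_{n+1}^2 - B_n^2 = B_{2n+1} holds; in particular, the difference of the squares of two consecutive balancing numbers is again a balancing number. -/
/-!
The balancing numbers are the Lucas sequence `U(6, 1)`. Every such sequence satisfies the
addition formula `U (m + n + 1) = U (m + 1) * U (n + 1) - U m * U n`, because for fixed `m` both
sides obey the recurrence in `n`; taking `m = n` gives the identity.
-/

section LucasSequence

variable {R : Type*} [CommRing R] (P : R) (U : ℕ → R)

theorem lucasSequence_add_add_one (h0 : U 0 = 0) (h1 : U 1 = 1)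
    (hU : ∀ n, U (n + 2) = P * U (n + 1) - U n) (m n : ℕ) :
    U (m + n + 1) = U (m + 1) * U (n + 1) - U m * U n := by
  induction n using Nat.twoStepInduction with
  | zero => simp [h0, h1]
  | one => simp [hU 0, hU m, h0, h1, mul_comm]
  | more n ih₀ ih₁ =>
    calc U (m + (n + 2) + 1)
        = P * U (m + (n + 1) + 1) - U (m + n + 1) := hU (m + n + 1)
      _ = U (m + 1) * (P * U (n + 2) - U (n + 1)) - U m * (P * U (n + 1) - U n) := by
        rw [ih₀, ih₁]; ring
      _ = U (m + 1) * U (n + 2 + 1) - U m * U (n + 2) := by rw [hU (n + 1), hU n]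

end LucasSequence

/-- For every nonnegative integer n, B_{n+1}^2 - B_n^2 = B_{2n+1}. -/
theorem balancing_sq_diff
    (B : ℕ → ℤ) (hB0 : B 0 = 0) (hB1 : B 1 = 1)
    (hB : ∀ n, B (n + 2) = 6 * B (n + 1) - B n) :
    ∀ n : ℕ, B (n + 1) ^ 2 - B n ^ 2 = B (2 * n + 1) := by
  intro n
  rw [two_mul, lucasSequence_add_add_one 6 B hB0 hB1 hB]
  ring
end

section
/- For every odd positive integer m, the identity B_m + 1 = B_{(m+1)/2} · C_{(m-1)/2} holds. -/
/-!
Both sequences solve `x (n + 2) = 6 x (n + 1) - x n`, and a solution is determined by its first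
two values. Comparing initial values gives `C n = 2 B (n + 1) - 6 B n` and the addition formula
`B (m + n + 1) = B (m + 1) B (n + 1) - B m B n`, hence `B (2k + 1) = B (k + 1)² - B k²`. The
invariant quadratic form `x (n + 1)² - 6 x (n + 1) x n + x n²` equals `1` on `B`, and with it
`B (2k + 1) + 1 = 2 B (k + 1)² - 6 B (k + 1) B k = B (k + 1) C k`.
-/

variable {R : Type*} [CommRing R]

def SolvesRecurrence (a : R) (x : ℕ → R) : Prop :=
  ∀ n, x (n + 2) = a * x (n + 1) - x n

namespace SolvesRecurrence

variable {a : R} {x y : ℕ → R}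

theorem shift (hx : SolvesRecurrence a x) (k : ℕ) : SolvesRecurrence a (fun n ↦ x (n + k)) := by
  intro n
  simpa only [Nat.add_right_comm _ k] using hx (n + k)

theorem mul_sub_mul (hx : SolvesRecurrence a x) (hy : SolvesRecurrence a y) (c d : R) :
    SolvesRecurrence a (fun n ↦ c * x n - d * y n) := by
  intro n
  simp only [hx n, hy n]
  ring

theorem eq_of_init_eq (hx : SolvesRecurrence a x) (hy : SolvesRecurrence a y)
    (h0 : x 0 = y 0) (h1 : x 1 = y 1) : x = y := by
  funext n
  induction n using Nat.twoStepInduction with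
  | zero => exact h0
  | one => exact h1
  | more n ihn ihn1 => rw [hx, hy, ihn, ihn1]

theorem sq_sub_mul_add_sq (hx : SolvesRecurrence a x) (n : ℕ) :
    x (n + 1) ^ 2 - a * x (n + 1) * x n + x n ^ 2 = x 1 ^ 2 - a * x 1 * x 0 + x 0 ^ 2 := by
  induction n with
  | zero => rfl
  | succ n ih => rw [hx n, ← ih]; ring

theorem add_add_one_eq (hx : SolvesRecurrence a x) (h0 : x 0 = 0) (h1 : x 1 = 1) (m n : ℕ) :
    x (m + n + 1) = x (m + 1) * x (n + 1) - x m * x n := by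
  have key := (hx.shift (m + 1)).eq_of_init_eq ((hx.shift 1).mul_sub_mul hx (x (m + 1)) (x m))
    (by simp [h0, h1])
    (show x (1 + (m + 1)) = x (m + 1) * x (1 + 1) - x m * x 1 by
      rw [show 1 + (m + 1) = m + 2 by omega, hx m, hx 0, h0, h1]; ring)
  simpa only [show n + (m + 1) = m + n + 1 by omega] using congrFun key n

end SolvesRecurrence

/-- For every odd positive integer m, B_m + 1 = B_{(m+1)/2} · C_{(m-1)/2},
where C is the Lucas balancing sequence. -/
theorem balancing_plus_one_factorization
    (B : ℕ → ℤ) (hB0 : B 0 = 0) (hB1 : B 1 = 1)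
    (hB : ∀ n, B (n + 2) = 6 * B (n + 1) - B n)
    (C : ℕ → ℤ) (hC0 : C 0 = 2) (hC1 : C 1 = 6)
    (hC : ∀ n, C (n + 2) = 6 * C (n + 1) - C n) :
    ∀ m : ℕ, 0 < m → Odd m → B m + 1 = B ((m + 1) / 2) * C ((m - 1) / 2) := by
  have hB : SolvesRecurrence 6 B := hB
  have hC_eq : C = fun n ↦ 2 * B (n + 1) - 6 * B n :=
    SolvesRecurrence.eq_of_init_eq hC ((hB.shift 1).mul_sub_mul hB 2 6)
      (by simp [hB0, hB1, hC0]) (by simp [hB 0, hB0, hB1, hC1])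
  rintro m - ⟨k, rfl⟩
  have hdouble := hB.add_add_one_eq hB0 hB1 k k
  have hcassini := hB.sq_sub_mul_add_sq k
  rw [hB0, hB1] at hcassini
  rw [show (2 * k + 1 + 1) / 2 = k + 1 by omega, show (2 * k + 1 - 1) / 2 = k by omega,
    two_mul, hdouble, hC_eq]
  linear_combination -hcassini
end

section
/- If m and x are positive integers with B_m = 6^x - 1, then m is odd. -/
theorem odd_iff_of_balancing_recurrence (B : ℕ → ℤ) (hB0 : B 0 = 0) (hB1 : B 1 = 1)
    (hB : ∀ n, B (n + 2) = 6 * B (n + 1) - B n) (n : ℕ) : Odd (B n) ↔ Odd n := by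
  induction n using Nat.twoStepInduction with
  | zero => simp [hB0]
  | one => simp [hB1]
  | more n ih _ =>
    have h6 : Even (6 * B (n + 1)) := (by decide : Even (6 : ℤ)).mul_right _
    rw [hB n, Int.odd_sub', iff_true_intro h6, iff_true, ih]
    simp [Nat.odd_add]

/-- If m and x are positive integers with B_m = 6^x - 1, then m is odd. -/
theorem balancing_eq_six_pow_sub_one_odd
    (B : ℕ → ℤ) (hB0 : B 0 = 0) (hB1 : B 1 = 1)
    (hB : ∀ n, B (n + 2) = 6 * B (n + 1) - B n) :
    ∀ m x : ℕ, 0 < m → 0 < x → B m = 6 ^ x - 1 → Odd m := by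
  intro m x _ hx hBm
  have h6x : Even ((6 : ℤ) ^ x) := Int.even_pow.2 ⟨by decide, hx.ne'⟩
  rw [← odd_iff_of_balancing_recurrence B hB0 hB1 hB, hBm]
  exact h6x.sub_odd odd_one
end

section
/- If k is a positive integer such that every prime factor of B_k is at most 3 (equivalently, B_k divides some power of 6), then k ≤ 12. -/
/-!
For odd `n` the balancing number `B n` is `≡ ±1 (mod 6)`, so if it is `3`-smooth it is `1`,
which forces `n = 1`. For even `n = 2m` the doubling formula `B (2m) = 2 B m (3 B m - B (m - 1))`
shows that both `B m` and the cofactor `3 B m - B (m - 1) > 1` divide `B n`; when `m` is odd the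
first argument applies to `B m` and gives `m = 1`, and when `m` is even the cofactor is
`≡ -B (m - 1) ≡ ±1 (mod 6)`, so it would have a prime factor larger than `3`. Hence `n ≤ 2`.
-/

theorem isUnit_of_dvd_of_isCoprime_factorial {x y : ℤ} {N : ℕ} (hxy : x ∣ y)
    (hx : IsCoprime x N.factorial) (hy : ∀ p : ℕ, p.Prime → (p : ℤ) ∣ y → p ≤ N) :
    IsUnit x := by
  by_contra hunit
  have hp : x.natAbs.minFac.Prime :=
    Nat.minFac_prime fun h => hunit (Int.isUnit_iff_natAbs_eq.mpr h)
  have hpx : (x.natAbs.minFac : ℤ) ∣ x := Int.natCast_dvd.mpr (Nat.minFac_dvd _)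
  have hpN : x.natAbs.minFac ∣ N.factorial :=
    Nat.dvd_factorial hp.pos (hy _ hp (hpx.trans hxy))
  exact hp.not_isUnit (Int.ofNat_isUnit.mp
    (hx.isUnit_of_dvd' hpx (Int.natCast_dvd_natCast.mpr hpN)))

structure IsBalancingSeq (B : ℕ → ℤ) : Prop where
  zero : B 0 = 0
  one : B 1 = 1
  succ_succ : ∀ n, B (n + 2) = 6 * B (n + 1) - B n

namespace IsBalancingSeq

variable {B : ℕ → ℤ}

theorem two (hB : IsBalancingSeq B) : B 2 = 6 := by
  simp [hB.succ_succ 0, hB.zero, hB.one]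

theorem strictMono (hB : IsBalancingSeq B) : StrictMono B := by
  have h : ∀ n, 0 ≤ B n ∧ B n < B (n + 1) := by
    intro n
    induction n with
    | zero => simp [hB.zero, hB.one]
    | succ n ih =>
      have : B (n + 1 + 1) = 6 * B (n + 1) - B n := hB.succ_succ n
      constructor <;> omega
  exact strictMono_nat_of_lt_succ fun n => (h n).2

theorem isUnit_iff (hB : IsBalancingSeq B) {n : ℕ} : IsUnit (B n) ↔ n = 1 := by
  refine ⟨fun hn => ?_, fun hn => by simp [hn, hB.one]⟩
  have hpos : B 0 ≤ B n := hB.strictMono.monotone n.zero_le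
  rcases Int.isUnit_iff.mp hn with h | h
  · exact hB.strictMono.injective (h.trans hB.one.symm)
  · rw [hB.zero] at hpos; omega

theorem add_succ (hB : IsBalancingSeq B) (m n : ℕ) :
    B (m + n + 1) = B (m + 1) * B (n + 1) - B m * B n := by
  induction n using Nat.twoStepInduction with
  | zero => simp [hB.zero, hB.one]
  | one => rw [hB.succ_succ m, hB.one, hB.two]; ring
  | more n ih₀ ih₁ =>
    rw [show m + (n + 2) + 1 = m + n + 1 + 2 by ring, hB.succ_succ, hB.succ_succ n,
      hB.succ_succ (n + 1), show m + n + 1 + 1 = m + (n + 1) + 1 by ring, ih₀, ih₁]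
    ring

theorem two_mul_succ (hB : IsBalancingSeq B) (m : ℕ) :
    B (2 * (m + 1)) = 2 * B (m + 1) * (3 * B (m + 1) - B m) := by
  rw [show 2 * (m + 1) = m + 1 + m + 1 by ring, hB.add_succ, hB.succ_succ]
  ring

theorem emod_six (hB : IsBalancingSeq B) (n : ℕ) :
    B (2 * n) % 6 = 0 ∧ (B (2 * n + 1) % 6 = 1 ∨ B (2 * n + 1) % 6 = 5) := by
  induction n with
  | zero => simp [hB.zero, hB.one]
  | succ n ih =>
    have h₀ : B (2 * n + 2) = 6 * B (2 * n + 1) - B (2 * n) := hB.succ_succ (2 * n)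
    have h₁ : B (2 * n + 2 + 1) = 6 * B (2 * n + 2) - B (2 * n + 1) := hB.succ_succ (2 * n + 1)
    rw [show 2 * (n + 1) = 2 * n + 2 by ring]
    omega

theorem six_dvd_of_even (hB : IsBalancingSeq B) {n : ℕ} (hn : Even n) : 6 ∣ B n := by
  obtain ⟨m, rfl⟩ := hn
  exact Int.dvd_of_emod_eq_zero (two_mul m ▸ (hB.emod_six m).1)

theorem isCoprime_six_of_odd (hB : IsBalancingSeq B) {n : ℕ} (hn : Odd n) :
    IsCoprime (B n) 6 := by
  obtain ⟨m, rfl⟩ := hn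
  rw [Int.isCoprime_iff_gcd_eq_one, ← Int.gcd_emod]
  rcases (hB.emod_six m).2 with h | h <;> rw [h] <;> rfl

theorem eq_one_or_eq_two_of_prime_dvd_le_three (hB : IsBalancingSeq B) {k : ℕ}
    (hk : ∀ p : ℕ, p.Prime → (p : ℤ) ∣ B k → p ≤ 3) : k = 1 ∨ k = 2 := by
  have hsix : ((3).factorial : ℤ) = 6 := rfl
  obtain ⟨m, rfl | rfl⟩ := Nat.even_or_odd' k
  · rcases m with _ | m
    · exact absurd (hk 5 Nat.prime_five (by simp [hB.zero])) (by norm_num)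
    rcases Nat.even_or_odd (m + 1) with hm | hm
    · exfalso
      have hcof : IsCoprime (3 * B (m + 1) - B m) 6 := by
        obtain ⟨t, ht⟩ := hB.six_dvd_of_even hm
        have hodd : Odd m := by simpa [Nat.even_add_one] using hm
        rw [ht, show 3 * (6 * t) - B m = -B m + 6 * (3 * t) by ring,
          IsCoprime.add_mul_left_left_iff]
        exact (hB.isCoprime_six_of_odd hodd).neg_left
      have hunit := isUnit_of_dvd_of_isCoprime_factorial
        (hB.two_mul_succ m ▸ Dvd.intro_left _ rfl) (hsix ▸ hcof) hk
      have hlt : B m < B (m + 1) := hB.strictMono m.lt_succ_self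
      have hpos : 1 ≤ B (m + 1) := hB.one ▸ hB.strictMono.monotone (by omega)
      rcases Int.isUnit_iff.mp hunit with h | h <;> omega
    · right
      have hunit := isUnit_of_dvd_of_isCoprime_factorial
        (hB.two_mul_succ m ▸ (Dvd.intro_left _ rfl).mul_right _)
        (hsix ▸ hB.isCoprime_six_of_odd hm) hk
      rw [hB.isUnit_iff.mp hunit]
  · left
    exact hB.isUnit_iff.mp (isUnit_of_dvd_of_isCoprime_factorial dvd_rfl
      (hsix ▸ hB.isCoprime_six_of_odd (odd_two_mul_add_one m)) hk)

end IsBalancingSeq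

/-- If k is a positive integer such that every prime factor of B_k is at most 3,
then k ≤ 12. -/
theorem balancing_smooth_index_bound
    (B : ℕ → ℤ) (hB0 : B 0 = 0) (hB1 : B 1 = 1)
    (hB : ∀ n, B (n + 2) = 6 * B (n + 1) - B n) :
    ∀ k : ℕ, 0 < k → (∀ p : ℕ, p.Prime → (p : ℤ) ∣ B k → p ≤ 3) → k ≤ 12 := by
  intro k _ hk
  have := (IsBalancingSeq.mk hB0 hB1 hB).eq_one_or_eq_two_of_prime_dvd_le_three hk
  omega
end

section
/- The only solution of the equation 6^x - 1 = B_m in positive integers m and x is (m, x) = (3, 2); that is, the only solutions of B_{n+1}^x - B_n^x = B_m with n = 1 and m, x positive are given by 6^2 - 1 = 35 = B_3. -/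
/-!
With `a = 3`, Mathlib's Pell sequences `yₙ`, `xₙ` are the balancing numbers `Bₙ` and the
Lucas-balancing numbers `Cₙ`. If `m = 2k` is even, `B₂ = 6` divides `Bₘ`, whereas
`6 ^ x - 1 ≡ -1 (mod 6)`. If `m = 2j + 1` is odd, `Bₘ + 1 = 2 Cⱼ Bⱼ₊₁`, so the odd number `Cⱼ`
divides `6 ^ x` and is a power of `3`. Modulo `C₃ = 99 = 9 · 11` the sequence `Cⱼ` has period
`12`, and in one period `9 ∣ Cⱼ` only where `11 ∣ Cⱼ`; hence `Cⱼ ≤ 3`, i.e. `j ≤ 1`, and only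
`6 ^ 2 = 2 · C₁ · B₂` survives.
-/

theorem Nat.exists_eq_pow_of_coprime_of_dvd_mul_pow {c m p x : ℕ} (hp : p.Prime)
    (hc : c.Coprime m) (h : c ∣ (m * p) ^ x) : ∃ t ≤ x, c = p ^ t :=
  (Nat.dvd_prime_pow hp).mp <| (hc.pow_right x).dvd_of_dvd_mul_left (mul_pow m p x ▸ h)

namespace Pell

variable {a : ℕ} (a1 : 1 < a)

theorem yz_eq_of_recurrence {B : ℕ → ℤ} (h0 : B 0 = 0) (h1 : B 1 = 1)
    (h : ∀ n, B (n + 2) = 2 * a * B (n + 1) - B n) : ∀ n, B n = yz a1 n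
  | 0 => by simp [h0, yz]
  | 1 => by simp [h1, yz]
  | n + 2 => by
    rw [h, yz_succ_succ, yz_eq_of_recurrence h0 h1 h n, yz_eq_of_recurrence h0 h1 h (n + 1)]
    push_cast
    ring

theorem xn_mul_yn_succ (n : ℕ) : xn a1 n * yn a1 (n + 1) = xn a1 (n + 1) * yn a1 n + 1 := by
  have h := yz_sub a1 (Nat.le_add_right n 1)
  simp only [Nat.add_sub_cancel_left, yz, xz, yn_one, Nat.cast_one] at h
  zify
  linarith

theorem yn_two_mul_add_one_add_one (n : ℕ) :
    yn a1 (2 * n + 1) + 1 = 2 * xn a1 n * yn a1 (n + 1) := by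
  rw [two_mul, add_assoc, yn_add]
  linarith [xn_mul_yn_succ a1 n]

theorem odd_xn (ha : Odd a) : ∀ n, Odd (xn a1 n)
  | 0 => odd_one
  | 1 => by rwa [xn_one]
  | n + 2 => by
    have h := xn_succ_succ a1 n
    have hn := odd_xn ha n
    rw [mul_assoc, Nat.odd_iff] at *
    omega

end Pell

namespace Balancing

open Pell

local notation "x₃" => xn (by decide : 1 < 3)
local notation "y₃" => yn (by decide : 1 < 3)

theorem eleven_dvd_of_nine_dvd_xn (j : ℕ) (h : 9 ∣ x₃ j) : 11 ∣ x₃ j := by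
  induction j using Nat.strong_induction_on with
  | _ j ih =>
    rcases Nat.lt_or_ge j 12 with hj | hj
    · interval_cases j <;> revert h <;> decide
    · obtain ⟨i, rfl⟩ := Nat.exists_eq_add_of_le hj
      -- `x₃ 3 = 99 = 9 * 11`
      have hmod : x₃ (4 * 3 + i) ≡ x₃ i [MOD 9 * 11] := xn_modEq_x4n_add _ 3 i
      rw [hmod.dvd_iff (dvd_mul_right 9 11)] at h
      rw [hmod.dvd_iff (dvd_mul_left 11 9)]
      exact ih i (by omega) h

theorem le_one_of_xn_eq_three_pow {j t : ℕ} (h : x₃ j = 3 ^ t) : j ≤ 1 := by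
  have ht : t ≤ 1 := by
    by_contra! ht
    have h11 : 11 ∣ 3 ^ t :=
      h ▸ eleven_dvd_of_nine_dvd_xn j (h ▸ pow_dvd_pow 3 ht)
    exact absurd (Nat.prime_eleven.dvd_of_dvd_pow h11) (by norm_num)
  have hlt : x₃ j < x₃ 2 := by
    calc x₃ j = 3 ^ t := h
      _ ≤ 3 ^ 1 := Nat.pow_le_pow_right (by norm_num) ht
      _ < x₃ 2 := by decide
  exact Nat.lt_succ_iff.mp ((strictMono_x _).lt_iff_lt.mp hlt)

theorem eq_three_and_eq_two_of_six_pow_eq {m x : ℕ} (hx : 0 < x) (h : 6 ^ x = y₃ m + 1) :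
    m = 3 ∧ x = 2 := by
  have h6 : 6 ∣ 6 ^ x := dvd_pow_self 6 hx.ne'
  obtain ⟨j, rfl | rfl⟩ := Nat.even_or_odd' m
  · have h6y : 6 ∣ y₃ (2 * j) := (show 6 ∣ y₃ 2 by decide).trans (y_mul_dvd _ 2 j)
    exact absurd ((Nat.dvd_add_right h6y).mp (h ▸ h6)) (by norm_num)
  · rw [yn_two_mul_add_one_add_one] at h
    have hdvd : x₃ j ∣ (2 * 3) ^ x := ⟨2 * y₃ (j + 1), by rw [h]; ring⟩
    obtain ⟨t, -, ht⟩ := Nat.exists_eq_pow_of_coprime_of_dvd_mul_pow Nat.prime_three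
      (Nat.coprime_two_right.mpr (odd_xn _ (by decide : Odd 3) j)) hdvd
    have hj := le_one_of_xn_eq_three_pow ht
    interval_cases j
    · exact absurd (h ▸ h6) (by decide)
    · exact ⟨rfl, Nat.pow_right_injective (by norm_num : 2 ≤ 6) (h.trans (by decide : _ = 6 ^ 2))⟩

end Balancing

/-- The only solution of 6^x - 1 = B_m in positive integers m, x is (m, x) = (3, 2). -/
theorem six_pow_sub_one_eq_balancing
    (B : ℕ → ℤ) (hB0 : B 0 = 0) (hB1 : B 1 = 1)
    (hB : ∀ n, B (n + 2) = 6 * B (n + 1) - B n) :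
    ∀ m x : ℕ, 0 < m → 0 < x → ((6 : ℤ) ^ x - 1 = B m ↔ m = 3 ∧ x = 2) := by
  have hBy : ∀ n, B n = Pell.yn (by decide : 1 < 3) n :=
    Pell.yz_eq_of_recurrence _ hB0 hB1 fun n => by rw [hB]; norm_num
  intro m x _ hx
  rw [hBy, sub_eq_iff_eq_add]
  constructor
  · intro h
    exact Balancing.eq_three_and_eq_two_of_six_pow_eq hx (by exact_mod_cast h)
  · rintro ⟨rfl, rfl⟩
    decide
end

section
/- Let m, n, x be positive integers with n ≥ 2 and x ≥ 2 satisfying B_{n+1}^x - B_n^x = B_m. Then (n-1)x < m ≤ (n+1)x. (The paper states the slightly different bounds (n-2)x + 1 < m < nx + 2; the lower bound follows from this statement, while the stated correct upper bound is m ≤ (n+1)x.) -/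
/-!
`B` is the Lucas sequence `U(c, 1)` with `c = 6`, and only `c ≥ 3` matters: it makes `B` nonnegative
with `2 * B k < B (k + 1)`. The addition formula `B (a + b + 1) = B (a + 1) * B (b + 1) - B a * B b`
then makes `B` supermultiplicative and `k ↦ B (k + 1)` submultiplicative. Writing `n = k + 1`,
`B (k * x) < B (k * x + 1) ≤ B n ^ x < B (n + 1) ^ x - B n ^ x = B m ≤ B (n + 1) ^ x ≤ B ((n + 1) * x)`,
the strict middle step being `2 * B n < B (n + 1)`, and `B` is strictly increasing.
-/

section CommRing

variable {R : Type*} [CommRing R] {c : R} {B : ℕ → R}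

theorem lucas_add_succ (h0 : B 0 = 0) (h1 : B 1 = 1)
    (hrec : ∀ n, B (n + 2) = c * B (n + 1) - B n) (a b : ℕ) :
    B (a + b + 1) = B (a + 1) * B (b + 1) - B a * B b := by
  induction b using Nat.twoStepInduction with
  | zero => simp [h0, h1]
  | one => rw [hrec a, hrec 0, h0, h1]; ring
  | more b ih ih' =>
    have hsum := hrec (a + b + 1)
    rw [show a + b + 1 + 2 = a + (b + 2) + 1 by omega,
      show a + b + 1 + 1 = a + (b + 1) + 1 by omega] at hsum
    rw [hsum, ih, ih']
    linear_combination (-B (a + 1)) * hrec (b + 1) + B a * hrec b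

end CommRing

section Integer

variable {c : ℤ} {B : ℕ → ℤ}

theorem lucas_nonneg_and_two_mul_lt_succ (h0 : B 0 = 0) (h1 : B 1 = 1)
    (hrec : ∀ n, B (n + 2) = c * B (n + 1) - B n) (hc : 3 ≤ c) (k : ℕ) :
    0 ≤ B k ∧ 2 * B k < B (k + 1) := by
  induction k with
  | zero => simp [h0, h1]
  | succ k ih =>
    obtain ⟨hk, hlt⟩ := ih
    have hk' : 0 ≤ B (k + 1) := by linarith
    refine ⟨hk', ?_⟩
    rw [hrec]
    nlinarith

theorem lucas_nonneg (h0 : B 0 = 0) (h1 : B 1 = 1)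
    (hrec : ∀ n, B (n + 2) = c * B (n + 1) - B n) (hc : 3 ≤ c) (k : ℕ) : 0 ≤ B k :=
  (lucas_nonneg_and_two_mul_lt_succ h0 h1 hrec hc k).1

theorem lucas_two_mul_lt_succ (h0 : B 0 = 0) (h1 : B 1 = 1)
    (hrec : ∀ n, B (n + 2) = c * B (n + 1) - B n) (hc : 3 ≤ c) (k : ℕ) : 2 * B k < B (k + 1) :=
  (lucas_nonneg_and_two_mul_lt_succ h0 h1 hrec hc k).2

theorem lucas_strictMono (h0 : B 0 = 0) (h1 : B 1 = 1)
    (hrec : ∀ n, B (n + 2) = c * B (n + 1) - B n) (hc : 3 ≤ c) : StrictMono B :=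
  strictMono_nat_of_lt_succ fun k => by
    linarith [lucas_nonneg h0 h1 hrec hc k, lucas_two_mul_lt_succ h0 h1 hrec hc k]

theorem lucas_two_mul_pow_lt_pow (h0 : B 0 = 0) (h1 : B 1 = 1)
    (hrec : ∀ n, B (n + 2) = c * B (n + 1) - B n) (hc : 3 ≤ c) (k : ℕ) {x : ℕ} (hx : x ≠ 0) :
    2 * B k ^ x < B (k + 1) ^ x :=
  calc 2 * B k ^ x ≤ 2 ^ x * B k ^ x :=
        mul_le_mul_of_nonneg_right (le_self_pow₀ (by norm_num) hx)
          (pow_nonneg (lucas_nonneg h0 h1 hrec hc k) _)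
    _ = (2 * B k) ^ x := (mul_pow _ _ _).symm
    _ < B (k + 1) ^ x := pow_lt_pow_left₀ (lucas_two_mul_lt_succ h0 h1 hrec hc k)
        (by linarith [lucas_nonneg h0 h1 hrec hc k]) hx

theorem lucas_mul_le_add (h0 : B 0 = 0) (h1 : B 1 = 1)
    (hrec : ∀ n, B (n + 2) = c * B (n + 1) - B n) (hc : 3 ≤ c) (a b : ℕ) :
    B a * B b ≤ B (a + b) := by
  cases a with
  | zero => simp [h0, lucas_nonneg h0 h1 hrec hc b]
  | succ a =>
    rw [add_right_comm, lucas_add_succ h0 h1 hrec]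
    have hmono := (lucas_strictMono h0 h1 hrec hc).monotone (Nat.le_succ a)
    nlinarith [lucas_nonneg h0 h1 hrec hc a, lucas_nonneg h0 h1 hrec hc b,
      lucas_two_mul_lt_succ h0 h1 hrec hc b]

theorem lucas_add_succ_le_mul (h0 : B 0 = 0) (h1 : B 1 = 1)
    (hrec : ∀ n, B (n + 2) = c * B (n + 1) - B n) (hc : 3 ≤ c) (a b : ℕ) :
    B (a + b + 1) ≤ B (a + 1) * B (b + 1) := by
  rw [lucas_add_succ h0 h1 hrec]
  nlinarith [lucas_nonneg h0 h1 hrec hc a, lucas_nonneg h0 h1 hrec hc b]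

theorem lucas_pow_le_mul (h0 : B 0 = 0) (h1 : B 1 = 1)
    (hrec : ∀ n, B (n + 2) = c * B (n + 1) - B n) (hc : 3 ≤ c) (k : ℕ) {x : ℕ} (hx : 1 ≤ x) :
    B k ^ x ≤ B (k * x) := by
  induction x, hx using Nat.le_induction with
  | base => simp
  | succ x _ ih =>
    calc B k ^ (x + 1) = B k ^ x * B k := pow_succ _ _
      _ ≤ B (k * x) * B k := mul_le_mul_of_nonneg_right ih (lucas_nonneg h0 h1 hrec hc k)
      _ ≤ B (k * (x + 1)) := by
        rw [mul_add_one]; exact lucas_mul_le_add h0 h1 hrec hc _ _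

theorem lucas_mul_add_one_le_pow (h0 : B 0 = 0) (h1 : B 1 = 1)
    (hrec : ∀ n, B (n + 2) = c * B (n + 1) - B n) (hc : 3 ≤ c) (k x : ℕ) :
    B (k * x + 1) ≤ B (k + 1) ^ x := by
  induction x with
  | zero => simp [h1]
  | succ x ih =>
    calc B (k * (x + 1) + 1) ≤ B (k * x + 1) * B (k + 1) := by
          rw [mul_add_one]; exact lucas_add_succ_le_mul h0 h1 hrec hc _ _
      _ ≤ B (k + 1) ^ x * B (k + 1) :=
        mul_le_mul_of_nonneg_right ih (lucas_nonneg h0 h1 hrec hc _)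
      _ = B (k + 1) ^ (x + 1) := (pow_succ _ _).symm

end Integer

/-- If m, n, x are positive integers with n ≥ 2, x ≥ 2 and B_{n+1}^x - B_n^x = B_m,
then (n-1)x < m ≤ (n+1)x. -/
theorem balancing_index_bounds
    (B : ℕ → ℤ) (hB0 : B 0 = 0) (hB1 : B 1 = 1)
    (hB : ∀ n, B (n + 2) = 6 * B (n + 1) - B n) :
    ∀ m n x : ℕ, 0 < m → 2 ≤ n → 2 ≤ x →
      B (n + 1) ^ x - B n ^ x = B m →
      (n - 1) * x < m ∧ m ≤ (n + 1) * x := by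
  intro m n x _ hn hx hm
  have hc : (3 : ℤ) ≤ 6 := by norm_num
  have hmono := lucas_strictMono hB0 hB1 hB hc
  obtain ⟨k, rfl⟩ : ∃ k, n = k + 1 := ⟨n - 1, by omega⟩
  have hgap := lucas_two_mul_pow_lt_pow hB0 hB1 hB hc (k + 1) (by omega : x ≠ 0)
  constructor
  · have : B (k * x) < B m :=
      calc B (k * x) < B (k * x + 1) := hmono (Nat.lt_succ_self _)
        _ ≤ B (k + 1) ^ x := lucas_mul_add_one_le_pow hB0 hB1 hB hc k x
        _ < B m := by linarith
    simpa using hmono.lt_iff_lt.mp this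
  · have : B m ≤ B ((k + 2) * x) :=
      calc B m ≤ B (k + 2) ^ x := by linarith [pow_nonneg (lucas_nonneg hB0 hB1 hB hc (k + 1)) x]
        _ ≤ B ((k + 2) * x) := lucas_pow_le_mul hB0 hB1 hB hc _ (by omega)
    exact hmono.le_iff_le.mp this
end

section
/- Let m, n, x be positive integers with n ≥ 2 and x ≥ 3 satisfying B_{n+1}^x - B_n^x = B_m. Then |α^m · (4√2)^{-1} · B_{n+1}^{-x} - 1| < 2/5.8^x, where α = 3 + 2√2. -/
/-!
By Binet's formula `4√2 B_k = α^k - β^k` with `β = 3 - 2√2 ∈ (0, 1)`, the equation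
`B_m = B_{n+1}^x - B_n^x` turns the linear form into `(β^m - 4√2 B_n^x) / (4√2 B_{n+1}^x)`.
Both terms of the numerator are small relative to the denominator: `β^m ≤ 1`, and the ratio
`B_n / B_{n+1}` never exceeds `5/29 = 1/5.8`.
-/

theorem balancing_binet (B : ℕ → ℤ) (hB0 : B 0 = 0) (hB1 : B 1 = 1)
    (hB : ∀ n, B (n + 2) = 6 * B (n + 1) - B n) :
    ∀ k, 4 * √2 * (B k : ℝ) = (3 + 2 * √2) ^ k - (3 - 2 * √2) ^ k
  | 0 => by simp [hB0]
  | 1 => by simp [hB1]; ring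
  | k + 2 => by
    have hsq : √2 ^ 2 = 2 := Real.sq_sqrt (by norm_num)
    rw [hB]
    push_cast
    linear_combination 6 * balancing_binet B hB0 hB1 hB (k + 1) - balancing_binet B hB0 hB1 hB k
      - 4 * ((3 + 2 * √2) ^ k - (3 - 2 * √2) ^ k) * hsq

theorem balancing_ratio_bound (B : ℕ → ℤ) (hB0 : B 0 = 0) (hB1 : B 1 = 1)
    (hB : ∀ n, B (n + 2) = 6 * B (n + 1) - B n) {n : ℕ} (hn : 1 ≤ n) :
    1 ≤ B n ∧ 29 * B n ≤ 5 * B (n + 1) := by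
  induction n, hn using Nat.le_induction with
  | base =>
    have h2 : B 2 = 6 * B 1 - B 0 := hB 0
    show 1 ≤ B 1 ∧ 29 * B 1 ≤ 5 * B 2
    omega
  | succ k _ ih =>
    -- `29 B_k ≤ 5 B_{k+1}` gives `5 B_k ≤ B_{k+1}`, which is `29 B_{k+1} ≤ 5 (6 B_{k+1} - B_k)`.
    have hrec : B (k + 2) = 6 * B (k + 1) - B k := hB k
    show 1 ≤ B (k + 1) ∧ 29 * B (k + 1) ≤ 5 * B (k + 2)
    omega

theorem three_sub_two_sqrt_two_mem_Ioo : 3 - 2 * √2 ∈ Set.Ioo (0 : ℝ) 1 := by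
  have hsq : √2 ^ 2 = 2 := Real.sq_sqrt (by norm_num)
  constructor <;> nlinarith [Real.one_lt_sqrt_two]

theorem abs_sub_mul_pow_div_lt {r b c M N : ℝ} (x : ℕ) (hr : 0 < r) (hb0 : 0 ≤ b) (hb1 : b ≤ 1)
    (hc : 1 < c) (hM : 0 ≤ M) (hMN : r * M ≤ N) (hrN : r ≤ N) :
    |(b - c * M ^ x) / (c * N ^ x)| < 2 / r ^ x := by
  have hN : 0 < N := hr.trans_le hrN
  have hden : 0 < c * N ^ x := by positivity
  have hfirst : b / (c * N ^ x) < 1 / r ^ x := by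
    rw [div_lt_div_iff₀ hden (by positivity), one_mul]
    calc b * r ^ x ≤ 1 * N ^ x :=
          mul_le_mul hb1 (pow_le_pow_left₀ hr.le hrN x) (by positivity) zero_le_one
      _ < c * N ^ x := mul_lt_mul_of_pos_right hc (by positivity)
  have hsecond : (M / N) ^ x ≤ 1 / r ^ x := by
    rw [← one_div_pow]
    refine pow_le_pow_left₀ (by positivity) ?_ x
    rw [div_le_div_iff₀ hN hr, one_mul, mul_comm]
    exact hMN
  calc |(b - c * M ^ x) / (c * N ^ x)| ≤ (b + c * M ^ x) / (c * N ^ x) := by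
        rw [abs_div, abs_of_pos hden]
        gcongr
        exact (abs_sub _ _).trans_eq (by rw [abs_of_nonneg hb0, abs_of_nonneg (by positivity)])
    _ = b / (c * N ^ x) + (M / N) ^ x := by rw [div_pow]; field_simp
    _ < 1 / r ^ x + 1 / r ^ x := add_lt_add_of_lt_of_le hfirst hsecond
    _ = 2 / r ^ x := by ring

/-- If m, n, x are positive integers with n ≥ 2, x ≥ 3 and B_{n+1}^x - B_n^x = B_m,
then |α^m · (4√2)⁻¹ · B_{n+1}^{-x} - 1| < 2/5.8^x, where α = 3 + 2√2. -/
theorem balancing_linear_form_bound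
    (B : ℕ → ℤ) (hB0 : B 0 = 0) (hB1 : B 1 = 1)
    (hB : ∀ n, B (n + 2) = 6 * B (n + 1) - B n)
    (α : ℝ) (hα : α = 3 + 2 * Real.sqrt 2) :
    ∀ m n x : ℕ, 0 < m → 2 ≤ n → 3 ≤ x →
      B (n + 1) ^ x - B n ^ x = B m →
      |α ^ m * (4 * Real.sqrt 2)⁻¹ * ((B (n + 1) : ℝ) ^ x)⁻¹ - 1| < 2 / 5.8 ^ x := by
  subst hα
  intro m n x _ hn _ hBm
  obtain ⟨hBn, hratio⟩ := balancing_ratio_bound B hB0 hB1 hB (n := n) (by omega)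
  obtain ⟨hβ0, hβ1⟩ := three_sub_two_sqrt_two_mem_Ioo
  have hBn' : (1 : ℝ) ≤ B n := by exact_mod_cast hBn
  have hratio' : (29 : ℝ) * B n ≤ 5 * B (n + 1) := by exact_mod_cast hratio
  have hBm' : (B m : ℝ) = (B (n + 1) : ℝ) ^ x - (B n : ℝ) ^ x := by exact_mod_cast hBm.symm
  have hN : (B (n + 1) : ℝ) ≠ 0 := by linarith
  have hform : (3 + 2 * √2) ^ m * (4 * √2)⁻¹ * ((B (n + 1) : ℝ) ^ x)⁻¹ - 1
      = ((3 - 2 * √2) ^ m - 4 * √2 * (B n : ℝ) ^ x) / (4 * √2 * (B (n + 1) : ℝ) ^ x) := by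
    field_simp
    linear_combination -balancing_binet B hB0 hB1 hB m + 4 * √2 * hBm'
  rw [hform]
  exact abs_sub_mul_pow_div_lt x (by norm_num) (by positivity) (pow_le_one₀ hβ0.le hβ1.le)
    (by linarith [Real.one_lt_sqrt_two]) (by linarith) (by linarith) (by linarith)
end

section
/- For all positive integers m, n, x, one has α^m ≠ 4√2 · B_{n+1}^x, where α = 3 + 2√2; equivalently, the quantity Λ₁ = α^m (4√2)^{-1} B_{n+1}^{-x} - 1 is nonzero. -/
/-! In `ℤ[√2]` every power of `3 + 2√2` has positive rational part, whereas `4√2 · B^x` is an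
integer multiple of `√2`; equality would make `√2` rational. -/

open Real

lemma intCast_ne_intCast_mul_sqrt_two {p : ℤ} (hp : p ≠ 0) (d : ℤ) : (p : ℝ) ≠ d * √2 := by
  rcases eq_or_ne d 0 with rfl | hd
  · simpa using hp
  · exact ((irrational_sqrt_two.intCast_mul hd).ne_int p).symm

lemma exists_three_add_two_mul_sqrt_two_pow (m : ℕ) :
    ∃ p q : ℕ, 0 < p ∧ (3 + 2 * √2) ^ m = p + q * √2 := by
  induction m with
  | zero => exact ⟨1, 0, one_pos, by simp⟩
  | succ k ih =>
    obtain ⟨p, q, hp, hpow⟩ := ih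
    refine ⟨3 * p + 4 * q, 2 * p + 3 * q, by omega, ?_⟩
    rw [pow_succ, hpow]
    push_cast
    linear_combination (2 * (q : ℝ)) * sq_sqrt (zero_le_two : (0 : ℝ) ≤ 2)

theorem balancing_lambda_one_nonzero_general
    (B : ℕ → ℤ)
    (α : ℝ) (hα : α = 3 + 2 * Real.sqrt 2) :
    ∀ m n x : ℕ, 0 < m → 0 < n → 0 < x →
      α ^ m ≠ 4 * Real.sqrt 2 * (B (n + 1) : ℝ) ^ x := by
  intro m n x _ _ _ heq
  obtain ⟨p, q, hp, hpow⟩ := exists_three_add_two_mul_sqrt_two_pow m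
  refine intCast_ne_intCast_mul_sqrt_two (p := p) (by omega) (4 * B (n + 1) ^ x - q) ?_
  rw [hα, hpow] at heq
  push_cast
  linear_combination heq

/-- For all positive integers m, n, x, α^m ≠ 4√2 · B_{n+1}^x, where α = 3 + 2√2;
equivalently Λ₁ = α^m (4√2)⁻¹ B_{n+1}^{-x} - 1 is nonzero. -/
theorem balancing_lambda_one_nonzero
    (B : ℕ → ℤ) (hB0 : B 0 = 0) (hB1 : B 1 = 1)
    (hB : ∀ n, B (n + 2) = 6 * B (n + 1) - B n)
    (α : ℝ) (hα : α = 3 + 2 * Real.sqrt 2) :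
    ∀ m n x : ℕ, 0 < m → 0 < n → 0 < x →
      α ^ m ≠ 4 * Real.sqrt 2 * (B (n + 1) : ℝ) ^ x :=
  balancing_lambda_one_nonzero_general B α hα
end

section
/- There are no positive integers m, n, x with 2 ≤ n ≤ 37 and x ≥ 3 satisfying B_{n+1}^x - B_n^x = B_m. -/
/-!
Reduce modulo a well-chosen `M`. The pairs `(B k, B (k + 1)) mod M` run through a periodic orbit
of `(a, b) ↦ (b, 6b - a)`, so `B m mod M` lies in a finite, computable set of residues; and for
`x ≥ 3` the residue of `B (n + 1) ^ x - B n ^ x` only depends on `x - 3` modulo some period.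
For each `2 ≤ n ≤ 37` a few moduli suffice: every class of `x - 3` modulo the lcm of their
exponent periods is excluded by one of them. This finite check is done by the kernel.
-/

theorem pow_add_eq_pow_add_mod {M : Type*} [Monoid M] {a : M} {k T : ℕ}
    (h : a ^ (k + T) = a ^ k) (s : ℕ) : a ^ (k + s) = a ^ (k + s % T) := by
  have hper : Function.IsPeriodicPt (a * ·) T (a ^ k) := by
    simp only [Function.IsPeriodicPt, Function.IsFixedPt, mul_left_iterate, ← pow_add,
      add_comm T, h]
  have := hper.iterate_mod_apply s
  simp only [mul_left_iterate, ← pow_add] at this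
  rw [add_comm k, add_comm k, this]

def balancing : ℕ → ℤ
  | 0 => 0
  | 1 => 1
  | n + 2 => 6 * balancing (n + 1) - balancing n

theorem eq_balancing (B : ℕ → ℤ) (hB0 : B 0 = 0) (hB1 : B 1 = 1)
    (hB : ∀ n, B (n + 2) = 6 * B (n + 1) - B n) : B = balancing := by
  funext n
  induction n using Nat.twoStepInduction with
  | zero => rw [hB0, balancing]
  | one => rw [hB1, balancing]
  | more n ih₀ ih₁ => rw [hB, ih₀, ih₁, balancing]

def balancingStep (M : ℕ) (p : ZMod M × ZMod M) : ZMod M × ZMod M := (p.2, 6 * p.2 - p.1)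

theorem balancing_cast_eq_iterate (M k : ℕ) :
    ((balancing k : ZMod M), (balancing (k + 1) : ZMod M)) = (balancingStep M)^[k] (0, 1) := by
  induction k with
  | zero => simp [balancing]
  | succ k ih =>
    rw [Function.iterate_succ_apply', ← ih, balancingStep, balancing]
    push_cast
    rfl

structure SieveModulus where
  modulus : ℕ
  balancingPeriod : ℕ
  powerPeriod : ℕ

namespace SieveModulus

variable (q : SieveModulus)

def residues : List (ZMod q.modulus) :=
  (List.iterate (balancingStep q.modulus) (0, 1) q.balancingPeriod).map Prod.fst

def bases (n : ℕ) : ZMod q.modulus × ZMod q.modulus :=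
  ((balancingStep q.modulus)^[n] (0, 1)).swap

def IsValid (n : ℕ) : Prop :=
  0 < q.balancingPeriod ∧
    Function.IsPeriodicPt (balancingStep q.modulus) q.balancingPeriod (0, 1) ∧
    q.bases n ^ (3 + q.powerPeriod) = q.bases n ^ 3

def Excludes (n s : ℕ) : Prop :=
  let p := q.bases n ^ (3 + s)
  p.1 - p.2 ∉ q.residues

instance (n : ℕ) : Decidable (q.IsValid n) := by
  unfold IsValid Function.IsPeriodicPt Function.IsFixedPt; infer_instance

instance (n s : ℕ) : Decidable (q.Excludes n s) := by unfold Excludes; infer_instance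

-- Tabulated once, so that the covering check does not recompute powers for every residue class.
def exclusions (n : ℕ) : List Bool :=
  (List.range q.powerPeriod).map fun s => decide (q.Excludes n s)

variable {q}

theorem excludes_of_exclusions {n s : ℕ} (h : (q.exclusions n)[s]? = some true) :
    q.Excludes n s := by
  obtain ⟨a, ha, hex⟩ : ∃ a, (List.range q.powerPeriod)[s]? = some a ∧ q.Excludes n a := by
    simpa [exclusions] using h
  obtain ⟨_, rfl⟩ := List.getElem?_eq_some_iff.1 ha
  simpa using hex

theorem balancing_cast_mem_residues (hpos : 0 < q.balancingPeriod)
    (hper : Function.IsPeriodicPt (balancingStep q.modulus) q.balancingPeriod (0, 1)) (m : ℕ) :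
    (balancing m : ZMod q.modulus) ∈ q.residues := by
  have hm : (balancing m : ZMod q.modulus) =
      ((balancingStep q.modulus)^[m % q.balancingPeriod] (0, 1)).1 := by
    rw [hper.iterate_mod_apply, ← balancing_cast_eq_iterate]
  rw [hm, residues]
  exact List.mem_map_of_mem (List.mem_iterate.2 ⟨_, Nat.mod_lt m hpos, rfl⟩)

theorem bases_eq (n : ℕ) :
    q.bases n = ((balancing (n + 1) : ZMod q.modulus), (balancing n : ZMod q.modulus)) := by
  rw [bases, ← balancing_cast_eq_iterate, Prod.swap_prod_mk]

theorem Excludes.ne {n x : ℕ} (hv : q.IsValid n) (hx : 3 ≤ x)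
    (h : q.Excludes n ((x - 3) % q.powerPeriod)) (m : ℕ) :
    balancing (n + 1) ^ x - balancing n ^ x ≠ balancing m := by
  intro heq
  have hpow : q.bases n ^ (3 + (x - 3) % q.powerPeriod) = q.bases n ^ x := by
    rw [← pow_add_eq_pow_add_mod hv.2.2, Nat.add_sub_cancel' hx]
  have hmem := balancing_cast_mem_residues hv.1 hv.2.1 m
  rw [← heq] at hmem
  apply h
  show (q.bases n ^ _).1 - (q.bases n ^ _).2 ∈ q.residues
  rw [hpow, bases_eq, Prod.pow_mk]
  simpa using hmem

end SieveModulus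

def coverPeriod (qs : List SieveModulus) : ℕ :=
  (qs.map SieveModulus.powerPeriod : Multiset ℕ).lcm

def Covers (n : ℕ) (qs : List SieveModulus) : Prop :=
  (∀ q ∈ qs, q.IsValid n) ∧ 0 < coverPeriod qs ∧
    ∀ r ∈ List.range (coverPeriod qs), ∃ q ∈ qs, (q.exclusions n)[r % q.powerPeriod]? = some true

instance (n : ℕ) (qs : List SieveModulus) : Decidable (Covers n qs) := by
  unfold Covers; infer_instance

theorem Covers.ne {n x : ℕ} {qs : List SieveModulus} (h : Covers n qs) (hx : 3 ≤ x) (m : ℕ) :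
    balancing (n + 1) ^ x - balancing n ^ x ≠ balancing m := by
  obtain ⟨hvalid, hpos, hcover⟩ := h
  obtain ⟨q, hq, hr⟩ := hcover _ (List.mem_range.2 (Nat.mod_lt (x - 3) hpos))
  have hdvd : q.powerPeriod ∣ coverPeriod qs :=
    Multiset.dvd_lcm (Multiset.mem_coe.2 (List.mem_map_of_mem hq))
  rw [Nat.mod_mod_of_dvd _ hdvd] at hr
  exact (SieveModulus.excludes_of_exclusions hr).ne (hvalid q hq) hx m

-- Found by a computer search over small moduli.
def sieveCertificate : ℕ → List SieveModulus
  | 2 => [⟨776, 48, 12⟩]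
  | 3 => [⟨88, 24, 10⟩, ⟨837, 180, 30⟩]
  | 4 => [⟨135, 36, 2⟩]
  | 5 => [⟨136, 8, 16⟩]
  | 6 => [⟨136, 8, 16⟩]
  | 7 => [⟨135, 36, 2⟩]
  | 8 => [⟨1971, 36, 12⟩]
  | 9 => [⟨1971, 36, 12⟩]
  | 10 => [⟨135, 36, 2⟩]
  | 11 => [⟨18875, 150, 150⟩, ⟨31, 15, 30⟩]
  | 12 => [⟨353, 11, 32⟩, ⟨6176, 96, 96⟩]
  | 13 => [⟨135, 36, 1⟩]
  | 14 => [⟨136, 8, 16⟩]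
  | 15 => [⟨513, 180, 18⟩]
  | 16 => [⟨135, 36, 2⟩]
  | 17 => [⟨136, 8, 16⟩]
  | 18 => [⟨136, 8, 16⟩]
  | 19 => [⟨135, 36, 2⟩]
  | 20 => [⟨1161, 396, 3⟩]
  | 21 => [⟨776, 48, 12⟩]
  | 22 => [⟨135, 36, 2⟩]
  | 23 => [⟨18875, 150, 50⟩]
  | 24 => [⟨18875, 150, 150⟩, ⟨152, 40, 18⟩]
  | 25 => [⟨135, 36, 1⟩]
  | 26 => [⟨776, 48, 12⟩]
  | 27 => [⟨1971, 36, 12⟩]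
  | 28 => [⟨135, 36, 2⟩]
  | 29 => [⟨136, 8, 16⟩]
  | 30 => [⟨136, 8, 16⟩]
  | 31 => [⟨135, 36, 2⟩]
  | 32 => [⟨88, 24, 5⟩, ⟨837, 180, 30⟩]
  | 33 => [⟨88, 24, 5⟩, ⟨837, 180, 15⟩]
  | 34 => [⟨135, 36, 2⟩]
  | 35 => [⟨712, 88, 22⟩, ⟨536, 136, 66⟩, ⟨353, 11, 352⟩, ⟨6176, 96, 96⟩]
  | 36 => [⟨18875, 150, 150⟩]
  | 37 => [⟨135, 36, 1⟩]
  | _ => []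

theorem covers_sieveCertificate : ∀ n, 2 ≤ n → n ≤ 37 → Covers n (sieveCertificate n) := by
  decide +kernel

/-- There are no positive integers m, n, x with 2 ≤ n ≤ 37 and x ≥ 3 satisfying
B_{n+1}^x - B_n^x = B_m. -/
theorem balancing_no_solution_small_n
    (B : ℕ → ℤ) (hB0 : B 0 = 0) (hB1 : B 1 = 1)
    (hB : ∀ n, B (n + 2) = 6 * B (n + 1) - B n) :
    ∀ m n x : ℕ, 0 < m → 2 ≤ n → n ≤ 37 → 3 ≤ x →
      B (n + 1) ^ x - B n ^ x ≠ B m := by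
  obtain rfl := eq_balancing B hB0 hB1 hB
  intro m n x _ hn2 hn37 hx
  exact (covers_sieveCertificate n hn2 hn37).ne hx m
end

section
/- For all positive integers m, n and every integer x ≥ 2, one has α^{m-(n+1)x} · 32^{(x-1)/2} ≠ 1, where α = 3 + 2√2 and 32^{(x-1)/2} denotes the real number √(32^{x-1}); equivalently, the quantity Λ₂ = α^{m-(n+1)x} · 32^{(x-1)/2} - 1 is nonzero. -/
/-!
Squaring `α ^ k * √(32 ^ (x - 1)) = 1` gives `α ^ (2 * k) = 32 ^ (1 - x)`, a rational number. But every
nonzero integer power of `α = 3 + 2√2` is irrational, because `α ^ n = c + e√2` with `e > 0` for `n ≥ 1`.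
Hence `k = 0`, and then `32 ^ (x - 1) = 1`, which is impossible for `x ≥ 2`.
-/

open Real

theorem exists_add_mul_sqrt_pow_succ {d a b : ℕ} (ha : 0 < a) (hb : 0 < b) (n : ℕ) :
    ∃ c e : ℕ, 0 < e ∧ ((a : ℝ) + b * √d) ^ (n + 1) = c + e * √d := by
  induction n with
  | zero => exact ⟨a, b, hb, by simp⟩
  | succ n ih =>
    obtain ⟨c, e, he, h⟩ := ih
    refine ⟨a * c + b * e * d, a * e + b * c, by positivity, ?_⟩
    rw [pow_succ, h]
    push_cast
    linear_combination (b * e : ℝ) * Real.mul_self_sqrt (Nat.cast_nonneg d)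

theorem irrational_add_mul_sqrt_pow {d a b : ℕ} (hd : Irrational √d) (ha : 0 < a) (hb : 0 < b)
    {n : ℕ} (hn : n ≠ 0) : Irrational (((a : ℝ) + b * √d) ^ n) := by
  obtain ⟨n, rfl⟩ := Nat.exists_eq_succ_of_ne_zero hn
  obtain ⟨c, e, he, h⟩ := exists_add_mul_sqrt_pow_succ ha hb n
  rw [h]
  exact (hd.natCast_mul he.ne').natCast_add c

theorem irrational_add_mul_sqrt_zpow {d a b : ℕ} (hd : Irrational √d) (ha : 0 < a) (hb : 0 < b)
    {n : ℤ} (hn : n ≠ 0) : Irrational (((a : ℝ) + b * √d) ^ n) := by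
  obtain ⟨n, rfl | rfl⟩ := Int.eq_nat_or_neg n
  · rw [zpow_natCast]
    exact irrational_add_mul_sqrt_pow hd ha hb (by omega)
  · rw [zpow_neg, zpow_natCast]
    exact (irrational_add_mul_sqrt_pow hd ha hb (by omega)).inv

/-- For all positive integers m, n and every integer x ≥ 2,
α^{m-(n+1)x} · 32^{(x-1)/2} ≠ 1, where α = 3 + 2√2 and
32^{(x-1)/2} denotes √(32^{x-1}); equivalently, Λ₂ is nonzero. -/
theorem balancing_lambda_two_nonzero
    (α : ℝ) (hα : α = 3 + 2 * Real.sqrt 2) :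
    ∀ m n x : ℕ, 0 < m → 0 < n → 2 ≤ x →
      α ^ ((m : ℤ) - (n + 1) * x) * Real.sqrt (32 ^ (x - 1)) ≠ 1 := by
  intro m n x _ _ hx h
  set k : ℤ := (m : ℤ) - (n + 1) * x
  have hsq : α ^ (2 * k) * 32 ^ (x - 1) = 1 := by
    calc α ^ (2 * k) * 32 ^ (x - 1) = (α ^ k * √(32 ^ (x - 1))) ^ 2 := by
          rw [mul_pow, sq_sqrt (by positivity), mul_comm 2 k, zpow_mul]
          norm_cast
      _ = 1 := by rw [h, one_pow]
  have hk : k = 0 := by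
    by_contra hk
    have hirr : Irrational (α ^ (2 * k)) := by
      rw [hα]
      exact_mod_cast irrational_add_mul_sqrt_zpow (d := 2) (a := 3) (b := 2)
        (by exact_mod_cast irrational_sqrt_two) (by norm_num) (by norm_num) (by omega)
    exact hirr ⟨(32 ^ (x - 1))⁻¹, by push_cast; exact (eq_inv_of_mul_eq_one_left hsq).symm⟩
  have h32 : (1 : ℝ) < 32 ^ (x - 1) := one_lt_pow₀ (by norm_num) (by omega)
  rw [hk, mul_zero, zpow_zero, one_mul] at hsq
  linarith
end

section
/- Let m, n, x be positive integers with n ≥ 38 and x ≥ 3 satisfying B_{n+1}^x - B_n^x = B_m. Then 0.9x - 1.4 < (n+1)x - m < x; in particular (n+1)x - m is a positive integer strictly less than x. -/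
/-!
The addition formula `B (a + b + 1) = B (a + 1) * B (b + 1) - B a * B b`, together with
`0 ≤ B a * B b ≤ B (a + 1) * B (b + 1) / 25`, makes `k ↦ B (k + 1)` multiplicative up to a factor
between `24 / 25` and `1`. Hence `B (n * x) ≤ B n * B (n + 1) ^ (x - 1) < B (n + 1) ^ x - B n ^ x`,
so `n * x < m`; and `B (n + 1) ^ x ≤ (25 / 24) ^ x * B (x * n + c) / B c` with `c = x / 10 + 2`,
where `B c ≥ 6 * 5 ^ (x / 10) ≥ (25 / 24) ^ x` because `(25 / 24) ^ 10 < 5`, so `m < n * x + c`.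
-/

/-- The Lucas sequence `U_n(P, 1)`; the balancing numbers are the case `P = 6`. -/
structure IsLucasSeq {R : Type*} [CommRing R] (P : R) (U : ℕ → R) : Prop where
  zero : U 0 = 0
  one : U 1 = 1
  succ_succ : ∀ n, U (n + 2) = P * U (n + 1) - U n

theorem mul_pow_lt_pow_sub_pow {R : Type*} [CommRing R] [LinearOrder R] [IsStrictOrderedRing R]
    {u v : R} (hu : 0 < u) (huv : 2 * u < v) (y : ℕ) :
    u * v ^ y < v ^ (y + 1) - u ^ (y + 1) := by
  have hv : 0 < v := by linarith
  have h1 : u ^ (y + 1) ≤ u * v ^ y := by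
    rw [pow_succ']; exact mul_le_mul_of_nonneg_left (pow_le_pow_left₀ hu.le (by linarith) y) hu.le
  have h2 : 2 * u * v ^ y < v ^ (y + 1) := by
    rw [pow_succ']; exact mul_lt_mul_of_pos_right huv (pow_pos hv y)
  linarith

namespace IsLucasSeq

theorem add_add_one {R : Type*} [CommRing R] {P : R} {U : ℕ → R} (hU : IsLucasSeq P U)
    (a b : ℕ) : U (a + b + 1) = U (a + 1) * U (b + 1) - U a * U b := by
  induction a using Nat.twoStepInduction with
  | zero => simp [hU.zero, hU.one]
  | one => simp [hU.zero, hU.one, hU.succ_succ, add_comm 1 b]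
  | more a ih ih' =>
    have e1 := hU.succ_succ (a + b + 1)
    have e2 := hU.succ_succ (a + 1)
    have e3 := hU.succ_succ a
    ring_nf at *
    linear_combination e1 + P * ih' - ih - U (1 + b) * e2 + U b * e3

variable {B : ℕ → ℤ}

theorem nonneg_and_lt_succ (hB : IsLucasSeq 6 B) (k : ℕ) : 0 ≤ B k ∧ B k < B (k + 1) := by
  induction k with
  | zero => simp [hB.zero, hB.one]
  | succ k ih => have := hB.succ_succ k; constructor <;> linarith

theorem nonneg (hB : IsLucasSeq 6 B) (k : ℕ) : 0 ≤ B k := (hB.nonneg_and_lt_succ k).1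

theorem strictMono (hB : IsLucasSeq 6 B) : StrictMono B :=
  strictMono_nat_of_lt_succ fun k => (hB.nonneg_and_lt_succ k).2

theorem pos (hB : IsLucasSeq 6 B) {k : ℕ} (hk : 0 < k) : 0 < B k :=
  hB.zero ▸ hB.strictMono hk

theorem five_mul_le_succ (hB : IsLucasSeq 6 B) (k : ℕ) : 5 * B k ≤ B (k + 1) := by
  cases k with
  | zero => simp [hB.zero, hB.one]
  | succ k => have := hB.succ_succ k; have := (hB.nonneg_and_lt_succ k).2; linarith

theorem six_mul_five_pow_le (hB : IsLucasSeq 6 B) (k : ℕ) : 6 * 5 ^ k ≤ B (k + 2) := by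
  induction k with
  | zero => simp [hB.succ_succ 0, hB.zero, hB.one]
  | succ k ih => have := hB.five_mul_le_succ (k + 2); rw [pow_succ]; linarith

theorem add_add_one_le_mul (hB : IsLucasSeq 6 B) (a b : ℕ) :
    B (a + b + 1) ≤ B (a + 1) * B (b + 1) := by
  have := mul_nonneg (hB.nonneg a) (hB.nonneg b)
  rw [hB.add_add_one]; linarith

theorem mul_le_add_add_one (hB : IsLucasSeq 6 B) (a b : ℕ) :
    24 * (B (a + 1) * B (b + 1)) ≤ 25 * B (a + b + 1) := by
  have := mul_le_mul (hB.five_mul_le_succ a) (hB.five_mul_le_succ b)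
    (by linarith [hB.nonneg b]) (hB.nonneg (a + 1))
  rw [hB.add_add_one]; linarith

theorem le_mul_pow (hB : IsLucasSeq 6 B) (a n j : ℕ) :
    B (a + 1 + j * n) ≤ B (a + 1) * B (n + 1) ^ j := by
  induction j with
  | zero => simp
  | succ j ih =>
    calc B (a + 1 + (j + 1) * n) = B (a + j * n + n + 1) := by ring_nf
      _ ≤ B (a + 1 + j * n) * B (n + 1) := by
        rw [show a + 1 + j * n = a + j * n + 1 by ring]; exact hB.add_add_one_le_mul _ _
      _ ≤ B (a + 1) * B (n + 1) ^ j * B (n + 1) :=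
        mul_le_mul_of_nonneg_right ih (hB.nonneg _)
      _ = B (a + 1) * B (n + 1) ^ (j + 1) := by ring

theorem mul_pow_le (hB : IsLucasSeq 6 B) (a n j : ℕ) :
    24 ^ j * (B (a + 1) * B (n + 1) ^ j) ≤ 25 ^ j * B (a + 1 + j * n) := by
  induction j with
  | zero => simp
  | succ j ih =>
    calc 24 ^ (j + 1) * (B (a + 1) * B (n + 1) ^ (j + 1))
        = 24 * B (n + 1) * (24 ^ j * (B (a + 1) * B (n + 1) ^ j)) := by ring
      _ ≤ 24 * B (n + 1) * (25 ^ j * B (a + 1 + j * n)) :=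
        mul_le_mul_of_nonneg_left ih (by linarith [hB.nonneg (n + 1)])
      _ = 25 ^ j * (24 * (B (a + j * n + 1) * B (n + 1))) := by ring_nf
      _ ≤ 25 ^ j * (25 * B (a + j * n + n + 1)) :=
        mul_le_mul_of_nonneg_left (hB.mul_le_add_add_one _ _) (by positivity)
      _ = 25 ^ (j + 1) * B (a + 1 + (j + 1) * n) := by ring_nf

theorem twentyfive_pow_le (hB : IsLucasSeq 6 B) (x : ℕ) :
    25 ^ x ≤ 24 ^ x * B (x / 10 + 2) := by
  have hrem : ∀ r < 10, (25 : ℤ) ^ r ≤ 6 * 24 ^ r := by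
    intro r hr; interval_cases r <;> norm_num
  have hquot : (25 : ℤ) ^ (10 * (x / 10)) ≤ 24 ^ (10 * (x / 10)) * 5 ^ (x / 10) := by
    rw [pow_mul, pow_mul, ← mul_pow]
    exact pow_le_pow_left₀ (by norm_num) (by norm_num) _
  have hx : 10 * (x / 10) + x % 10 = x := Nat.div_add_mod x 10
  calc (25 : ℤ) ^ x = 25 ^ (10 * (x / 10)) * 25 ^ (x % 10) := by rw [← pow_add, hx]
    _ ≤ 24 ^ (10 * (x / 10)) * 5 ^ (x / 10) * (6 * 24 ^ (x % 10)) :=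
        mul_le_mul hquot (hrem _ (Nat.mod_lt _ (by norm_num))) (by positivity) (by positivity)
    _ = 24 ^ (10 * (x / 10) + x % 10) * (6 * 5 ^ (x / 10)) := by ring
    _ = 24 ^ x * (6 * 5 ^ (x / 10)) := by rw [hx]
    _ ≤ 24 ^ x * B (x / 10 + 2) :=
        mul_le_mul_of_nonneg_left (hB.six_mul_five_pow_le _) (by positivity)

theorem mul_lt_of_pow_sub_pow_eq (hB : IsLucasSeq 6 B) {m n x : ℕ} (hn : 0 < n) (hx : 0 < x)
    (h : B (n + 1) ^ x - B n ^ x = B m) : n * x < m := by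
  obtain ⟨a, rfl⟩ := Nat.exists_eq_add_one.mpr hn
  obtain ⟨y, rfl⟩ := Nat.exists_eq_add_one.mpr hx
  refine hB.strictMono.lt_iff_lt.mp ?_
  calc B ((a + 1) * (y + 1)) = B (a + 1 + y * (a + 1)) := by ring_nf
    _ ≤ B (a + 1) * B (a + 1 + 1) ^ y := hB.le_mul_pow a (a + 1) y
    _ < B (a + 1 + 1) ^ (y + 1) - B (a + 1) ^ (y + 1) :=
        mul_pow_lt_pow_sub_pow (hB.pos a.succ_pos)
          (by linarith [hB.five_mul_le_succ (a + 1), hB.pos a.succ_pos]) y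
    _ = B m := h

theorem lt_add_of_pow_sub_pow_eq (hB : IsLucasSeq 6 B) {m n x : ℕ} (hn : 0 < n)
    (h : B (n + 1) ^ x - B n ^ x = B m) : m < n * x + x / 10 + 2 := by
  have hpow : B (n + 1) ^ x ≤ B (x / 10 + 1 + 1 + x * n) := by
    refine le_of_mul_le_mul_left ?_ (by positivity : (0 : ℤ) < 25 ^ x)
    calc 25 ^ x * B (n + 1) ^ x ≤ 24 ^ x * B (x / 10 + 2) * B (n + 1) ^ x :=
          mul_le_mul_of_nonneg_right (hB.twentyfive_pow_le x) (pow_nonneg (hB.nonneg _) _)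
      _ = 24 ^ x * (B (x / 10 + 1 + 1) * B (n + 1) ^ x) := by ring
      _ ≤ 25 ^ x * B (x / 10 + 1 + 1 + x * n) := hB.mul_pow_le _ _ _
  have hm : B m < B (x / 10 + 1 + 1 + x * n) := by
    linarith [pow_pos (hB.pos hn) x]
  have := hB.strictMono.lt_iff_lt.mp hm
  linarith [mul_comm n x]

end IsLucasSeq

/-- If m, n, x are positive integers with n ≥ 38, x ≥ 3 and B_{n+1}^x - B_n^x = B_m,
then 0.9x - 1.4 < (n+1)x - m < x; in particular (n+1)x - m is a positive integer
strictly less than x. -/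
theorem balancing_exponent_gap_bounds
    (B : ℕ → ℤ) (hB0 : B 0 = 0) (hB1 : B 1 = 1)
    (hB : ∀ n, B (n + 2) = 6 * B (n + 1) - B n) :
    ∀ m n x : ℕ, 0 < m → 38 ≤ n → 3 ≤ x →
      B (n + 1) ^ x - B n ^ x = B m →
      (0.9 * x - 1.4 < (((n : ℝ) + 1) * x - m) ∧ ((n : ℝ) + 1) * x - m < x) ∧
        0 < ((n : ℤ) + 1) * x - m := by
  intro m n x _ hn hx hBm
  have hLucas : IsLucasSeq 6 B := ⟨hB0, hB1, hB⟩
  have hlower : n * x < m := hLucas.mul_lt_of_pow_sub_pow_eq (by omega) (by omega) hBm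
  have hupper : m < n * x + x / 10 + 2 := hLucas.lt_add_of_pow_sub_pow_eq (by omega) hBm
  have hlowerR : (n : ℝ) * x + 1 ≤ m := by exact_mod_cast hlower
  have hupperR : (m : ℝ) + 1 ≤ n * x + (x / 10 : ℕ) + 2 := by exact_mod_cast hupper
  have hdiv : ((x / 10 : ℕ) : ℝ) ≤ x / 10 := Nat.cast_div_le
  refine ⟨⟨by linarith, by linarith⟩, ?_⟩
  have hlt : m < n * x + x := by omega
  have hltZ : (m : ℤ) < n * x + x := by exact_mod_cast hlt
  linarith
end
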